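/- Suppose the conditional distributions in the direction A→B are invariant between the two joint distributions, i.e. P1 a b / P1_A(a) = P2 a b / P2_A(a) for all a, b. Then the generalization-gap directionality score satisfies S_G = D_{B→A}(P2 ‖ P1) − [(H(P2_B) − H(P1_B)) − (H(P2_A) − H(P1_A))], where S_G = G_{B→A} − G_{A→B}. -/
import Mathlib


open Finset

noncomputable section

variable {α β : Type*}

/-- A-marginal of a joint distribution. -/
def margA [Fintype β] (P : α → β → ℝ) (a : α) : ℝ := ∑ b, P a b

/-- B-marginal of a joint distribution. -/
def margB [Fintype α] (P : α → β → ℝ) (b : β) : ℝ := ∑ a, P a b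

/-- Conditional entropy H_{A→B}(P). -/
def condEntAB [Fintype α] [Fintype β] (P : α → β → ℝ) : ℝ :=
  -∑ a, ∑ b, P a b * Real.log (P a b / margA P a)

/-- Conditional entropy H_{B→A}(P). -/
def condEntBA [Fintype α] [Fintype β] (P : α → β → ℝ) : ℝ :=
  -∑ a, ∑ b, P a b * Real.log (P a b / margB P b)

/-- Conditional cross-entropy CE_{A→B}(P2, P1). -/
def crossEntAB [Fintype α] [Fintype β] (P2 P1 : α → β → ℝ) : ℝ :=
  -∑ a, ∑ b, P2 a b * Real.log (P1 a b / margA P1 a)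

/-- Conditional cross-entropy CE_{B→A}(P2, P1). -/
def crossEntBA [Fintype α] [Fintype β] (P2 P1 : α → β → ℝ) : ℝ :=
  -∑ a, ∑ b, P2 a b * Real.log (P1 a b / margB P1 b)

/-- Conditional KL divergence D_{A→B}(P2 ‖ P1). -/
def klAB [Fintype α] [Fintype β] (P2 P1 : α → β → ℝ) : ℝ :=
  ∑ a, ∑ b, P2 a b * Real.log ((P2 a b / margA P2 a) / (P1 a b / margA P1 a))

/-- Conditional KL divergence D_{B→A}(P2 ‖ P1). -/
def klBA [Fintype α] [Fintype β] (P2 P1 : α → β → ℝ) : ℝ :=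
  ∑ a, ∑ b, P2 a b * Real.log ((P2 a b / margB P2 b) / (P1 a b / margB P1 b))

/-- Generalization gap G_{A→B}. -/
def gapAB [Fintype α] [Fintype β] (P2 P1 : α → β → ℝ) : ℝ :=
  crossEntAB P2 P1 - condEntAB P1

/-- Generalization gap G_{B→A}. -/
def gapBA [Fintype α] [Fintype β] (P2 P1 : α → β → ℝ) : ℝ :=
  crossEntBA P2 P1 - condEntBA P1

/-- Joint entropy H(P). -/
def jointEnt [Fintype α] [Fintype β] (P : α → β → ℝ) : ℝ :=
  -∑ a, ∑ b, P a b * Real.log (P a b)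

/-- Entropy of the A-marginal. -/
def entA [Fintype α] [Fintype β] (P : α → β → ℝ) : ℝ :=
  -∑ a, margA P a * Real.log (margA P a)

/-- Entropy of the B-marginal. -/
def entB [Fintype α] [Fintype β] (P : α → β → ℝ) : ℝ :=
  -∑ b, margB P b * Real.log (margB P b)

lemma margA_pos [Fintype β] [Nonempty β] (P : α → β → ℝ) (h : ∀ a b, 0 < P a b) (a : α) :
    0 < margA P a := Finset.sum_pos (fun b _ => h a b) Finset.univ_nonempty

lemma margB_pos [Fintype α] [Nonempty α] (P : α → β → ℝ) (h : ∀ a b, 0 < P a b) (b : β) :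
    0 < margB P b := Finset.sum_pos (fun a _ => h a b) Finset.univ_nonempty

lemma chainAB [Fintype α] [Fintype β] [Nonempty β] (P : α → β → ℝ)
    (h : ∀ a b, 0 < P a b) : condEntAB P = jointEnt P - entA P := by
  unfold condEntAB jointEnt entA
  have key : ∀ a b, P a b * Real.log (P a b / margA P a)
      = P a b * Real.log (P a b) - P a b * Real.log (margA P a) := by
    intro a b
    rw [Real.log_div (h a b).ne' (margA_pos P h a).ne', mul_sub]
  simp only [key, Finset.sum_sub_distrib, ← Finset.sum_mul]
  unfold margA
  ring

lemma chainBA [Fintype α] [Fintype β] [Nonempty α] (P : α → β → ℝ)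
    (h : ∀ a b, 0 < P a b) : condEntBA P = jointEnt P - entB P := by
  unfold condEntBA jointEnt entB
  have key : ∀ a b, P a b * Real.log (P a b / margB P b)
      = P a b * Real.log (P a b) - P a b * Real.log (margB P b) := by
    intro a b
    rw [Real.log_div (h a b).ne' (margB_pos P h b).ne', mul_sub]
  simp only [key, Finset.sum_sub_distrib]
  rw [Finset.sum_comm (f := fun a b => P a b * Real.log (margB P b))]
  simp only [← Finset.sum_mul]
  unfold margB
  ring

lemma klBA_eq [Fintype α] [Fintype β] [Nonempty α] (P2 P1 : α → β → ℝ)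
    (h1 : ∀ a b, 0 < P1 a b) (h2 : ∀ a b, 0 < P2 a b) :
    klBA P2 P1 = crossEntBA P2 P1 - condEntBA P2 := by
  unfold klBA crossEntBA condEntBA
  have key : ∀ a b, P2 a b * Real.log ((P2 a b / margB P2 b) / (P1 a b / margB P1 b))
      = P2 a b * Real.log (P2 a b / margB P2 b) - P2 a b * Real.log (P1 a b / margB P1 b) := by
    intro a b
    rw [Real.log_div (div_pos (h2 a b) (margB_pos P2 h2 b)).ne'
      (div_pos (h1 a b) (margB_pos P1 h1 b)).ne', mul_sub]
  simp only [key, Finset.sum_sub_distrib]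
  ring

/-- Under invariance of the A→B conditionals,
S_G = D_{B→A}(P2 ‖ P1) − [(H(P2_B) − H(P1_B)) − (H(P2_A) − H(P1_A))]. -/
theorem stmt_7 [Fintype α] [Fintype β] [Nonempty α] [Nonempty β]
    (P1 P2 : α → β → ℝ)
    (h1pos : ∀ a b, 0 < P1 a b) (h2pos : ∀ a b, 0 < P2 a b)
    (h1sum : ∑ a, ∑ b, P1 a b = 1) (h2sum : ∑ a, ∑ b, P2 a b = 1)
    (hinv : ∀ a b, P1 a b / margA P1 a = P2 a b / margA P2 a) :
    gapBA P2 P1 - gapAB P2 P1 =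
      klBA P2 P1 - ((entB P2 - entB P1) - (entA P2 - entA P1)) := by
  have hcross : crossEntAB P2 P1 = condEntAB P2 := by
    unfold crossEntAB condEntAB
    simp only [hinv]
  rw [gapAB, gapBA, hcross, klBA_eq P2 P1 h1pos h2pos, chainAB P1 h1pos,
    chainAB P2 h2pos, chainBA P1 h1pos, chainBA P2 h2pos]
  ring
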